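/- The function s ↦ ζ_{A₂}(s)/s is strictly decreasing on (2, ∞). In particular, for all α > β > 2, one has (α/β)·ζ_{A₂}(β) − ζ_{A₂}(α) > 0. -/

import Mathlib

noncomputable section

/-- A point of the Euclidean plane with coordinates `a`, `b`. -/
def vec2 (a b : ℝ) : EuclideanSpace ℝ (Fin 2) := (WithLp.equiv 2 (Fin 2 → ℝ)).symm ![a, b]

/-- The lattice (as a set of points) generated by `u` and `v`. -/
def latticeSet (u v : EuclideanSpace ℝ (Fin 2)) : Set (EuclideanSpace ℝ (Fin 2)) :=
  {p | ∃ m n : ℤ, p = (m : ℝ) • u + (n : ℝ) • v}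

/-- The determinant of the pair of plane vectors `(u, v)`. -/
def det2 (u v : EuclideanSpace ℝ (Fin 2)) : ℝ := u 0 * v 1 - u 1 * v 0

/-- `L` is a two-dimensional lattice, i.e. `L = ℤu ⊕ ℤv` for a basis `(u,v)` of ℝ². -/
def IsLattice2 (L : Set (EuclideanSpace ℝ (Fin 2))) : Prop :=
  ∃ u v : EuclideanSpace ℝ (Fin 2), det2 u v ≠ 0 ∧ L = latticeSet u v

/-- `L` is a two-dimensional lattice of co-volume `V = |det(u,v)|`. -/
def IsLattice2OfCovol (L : Set (EuclideanSpace ℝ (Fin 2))) (V : ℝ) : Prop :=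
  ∃ u v : EuclideanSpace ℝ (Fin 2), det2 u v ≠ 0 ∧ |det2 u v| = V ∧ L = latticeSet u v

/-- The Epstein zeta function of a set of points: `ζ_L(s) = Σ'_{p ∈ L, p ≠ 0} |p|^{-s}`. -/
def epsteinZeta (L : Set (EuclideanSpace ℝ (Fin 2))) (s : ℝ) : ℝ :=
  ∑' p : ↥(L \ {0}), ‖(p : EuclideanSpace ℝ (Fin 2))‖ ^ (-s)

/-- The Lennard-Jones type energy `E_f[L] = Σ'_{p ∈ L, p ≠ 0} (a|p|^{-α} - b|p|^{-β})`. -/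
def LJenergy (a b α β : ℝ) (L : Set (EuclideanSpace ℝ (Fin 2))) : ℝ :=
  ∑' p : ↥(L \ {0}),
    (a * ‖(p : EuclideanSpace ℝ (Fin 2))‖ ^ (-α) - b * ‖(p : EuclideanSpace ℝ (Fin 2))‖ ^ (-β))

/-- The triangular lattice `A₂ = √(2/√3)·[ℤ(1,0) ⊕ ℤ(1/2,√3/2)]`, of co-volume 1. -/
def triangularLattice : Set (EuclideanSpace ℝ (Fin 2)) :=
  latticeSet (Real.sqrt (2 / Real.sqrt 3) • vec2 1 0)
    (Real.sqrt (2 / Real.sqrt 3) • vec2 (1 / 2) (Real.sqrt 3 / 2))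

/-- The square lattice `ℤ² = ℤ(1,0) ⊕ ℤ(0,1)`. -/
def squareLattice : Set (EuclideanSpace ℝ (Fin 2)) := latticeSet (vec2 1 0) (vec2 0 1)

/-- `L` is the image of `L'` under an orthogonal transformation of ℝ². -/
def IsRotationOf (L L' : Set (EuclideanSpace ℝ (Fin 2))) : Prop :=
  ∃ O : EuclideanSpace ℝ (Fin 2) ≃ₗᵢ[ℝ] EuclideanSpace ℝ (Fin 2), L = O '' L'

/-- The unit co-volume lattice parametrized by `(x, y)` in the half-fundamental domain:
`ℤu ⊕ ℤv` with `u = (1/√y, 0)` and `v = (x/√y, √y)`. -/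
def latticeXY (x y : ℝ) : Set (EuclideanSpace ℝ (Fin 2)) :=
  latticeSet (vec2 (1 / Real.sqrt y) 0) (vec2 (x / Real.sqrt y) (Real.sqrt y))

/-- The Riemann zeta function `ζ(s) = Σ_{m ≥ 1} m^{-s}` (real variable version). -/
def riemannZetaReal (s : ℝ) : ℝ := ∑' n : ℕ+, (n : ℝ) ^ (-s)

end

/-!
Every nonzero point `m u + n v` of `A₂` has squared norm `(2/√3)(m² + mn + n²) ≥ 2/√3 > 1`, so
each term `|p|^{-s}/s` of `ζ_{A₂}(s)/s` is strictly decreasing in `s`, and hence so is the sum.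
Convergence for `s > 2` holds for every planar lattice `ℤu ⊕ ℤv`: from
`|det(p, v)| = |m| |det(u, v)|` and `|det(u, p)| = |n| |det(u, v)|` the coordinates of
`p = m u + n v` are bounded linearly by `|p|`, so the series is dominated by
`Σ_{x ∈ ℤ² \ 0} ‖x‖^{-s}`.
-/

open Real

local notation "ℝ²" => EuclideanSpace ℝ (Fin 2)

lemma abs_det2_le_norm_mul_norm (a b : ℝ²) : |det2 a b| ≤ ‖a‖ * ‖b‖ := by
  rw [EuclideanSpace.norm_eq, EuclideanSpace.norm_eq, ← sqrt_mul (by positivity)]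
  apply abs_le_sqrt
  simp only [det2, Fin.sum_univ_two, Real.norm_eq_abs, sq_abs]
  nlinarith [sq_nonneg (a 0 * b 0 + a 1 * b 1)]

lemma det2_smul_add_smul_left (u v : ℝ²) (m n : ℝ) : det2 (m • u + n • v) v = m * det2 u v := by
  simp only [det2, PiLp.add_apply, PiLp.smul_apply, smul_eq_mul]
  ring

lemma det2_smul_add_smul_right (u v : ℝ²) (m n : ℝ) : det2 u (m • u + n • v) = n * det2 u v := by
  simp only [det2, PiLp.add_apply, PiLp.smul_apply, smul_eq_mul]
  ring

lemma det2_zero_left (v : ℝ²) : det2 0 v = 0 := by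
  simp [det2]

lemma abs_det2_mul_norm_le (u v : ℝ²) (m n : ℤ) :
    |det2 u v| * ‖![m, n]‖ ≤ max ‖u‖ ‖v‖ * ‖(m : ℝ) • u + (n : ℝ) • v‖ := by
  set p := (m : ℝ) • u + (n : ℝ) • v
  have hm : |(m : ℝ)| * |det2 u v| ≤ ‖p‖ * ‖v‖ := by
    rw [← abs_mul, ← det2_smul_add_smul_left u v _ n]
    exact abs_det2_le_norm_mul_norm _ _
  have hn : |(n : ℝ)| * |det2 u v| ≤ ‖u‖ * ‖p‖ := by
    rw [← abs_mul, ← det2_smul_add_smul_right u v m]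
    exact abs_det2_le_norm_mul_norm _ _
  rw [EisensteinSeries.norm_eq_max_natAbs, Nat.cast_max, mul_max_of_nonneg _ _ (abs_nonneg _)]
  simp only [Matrix.cons_val_zero, Matrix.cons_val_one, Nat.cast_natAbs, Int.cast_abs]
  refine max_le ?_ ?_
  · nlinarith [le_max_right ‖u‖ ‖v‖, norm_nonneg p]
  · nlinarith [le_max_left ‖u‖ ‖v‖, norm_nonneg p]

theorem IsLattice2.summable_norm_rpow {L : Set ℝ²} (hL : IsLattice2 L) {s : ℝ} (hs : 2 < s) :
    Summable fun p : ↥(L \ {0}) => ‖(p : ℝ²)‖ ^ (-s) := by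
  obtain ⟨u, v, hdet, rfl⟩ := hL
  choose m n hp using fun p : ↥(latticeSet u v \ {0}) => p.2.1
  set c := |det2 u v| / max ‖u‖ ‖v‖
  have hM : 0 < max ‖u‖ ‖v‖ := by
    have hu : u ≠ 0 := by rintro rfl; exact hdet (det2_zero_left v)
    exact lt_max_of_lt_left (norm_pos_iff.2 hu)
  have hc : 0 < c := div_pos (abs_pos.2 hdet) hM
  have hinj : Function.Injective fun p => ![m p, n p] := by
    intro p q h
    have hm : m p = m q := congrFun h 0
    have hn : n p = n q := congrFun h 1
    exact Subtype.ext (by rw [hp p, hp q, hm, hn])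
  refine Summable.of_nonneg_of_le (fun _ => by positivity) (fun p => ?_)
    (((EisensteinSeries.summable_one_div_norm_rpow hs).comp_injective hinj).mul_left (c ^ (-s)))
  have hmn : ![m p, n p] ≠ 0 := by
    intro h
    apply p.2.2
    rw [hp p, show m p = 0 from congrFun h 0, show n p = 0 from congrFun h 1]
    simp
  have hle : c * ‖![m p, n p]‖ ≤ ‖(p : ℝ²)‖ := by
    rw [div_mul_eq_mul_div, div_le_iff₀ hM, mul_comm _ (max _ _), hp p]
    exact abs_det2_mul_norm_le u v (m p) (n p)
  calc ‖(p : ℝ²)‖ ^ (-s) ≤ (c * ‖![m p, n p]‖) ^ (-s) :=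
        rpow_le_rpow_of_nonpos (mul_pos hc (norm_pos_iff.2 hmn)) hle (by linarith)
    _ = c ^ (-s) * ‖![m p, n p]‖ ^ (-s) := mul_rpow hc.le (norm_nonneg _)

lemma rpow_neg_div_lt_rpow_neg_div {r α β : ℝ} (hr : 1 ≤ r) (hβ : 0 < β) (hβα : β < α) :
    r ^ (-α) / α < r ^ (-β) / β :=
  calc r ^ (-α) / α < r ^ (-α) / β :=
        div_lt_div_of_pos_left (rpow_pos_of_pos (by linarith) _) hβ hβα
    _ ≤ r ^ (-β) / β := by gcongr

theorem strictAntiOn_tsum_rpow_neg_div {ι : Type*} [Nonempty ι] {r : ι → ℝ} (hr : ∀ i, 1 ≤ r i)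
    {S : Set ℝ} (hS : S ⊆ Set.Ioi 0) (hsum : ∀ s ∈ S, Summable fun i => r i ^ (-s)) :
    StrictAntiOn (fun s => (∑' i, r i ^ (-s)) / s) S := by
  intro β hβ α hα hβα
  obtain ⟨i⟩ := ‹Nonempty ι›
  have hlt (j : ι) := rpow_neg_div_lt_rpow_neg_div (hr j) (hS hβ) hβα
  simp only [← tsum_div_const]
  exact Summable.tsum_lt_tsum (fun j => (hlt j).le) (hlt i)
    ((hsum α hα).div_const α) ((hsum β hβ).div_const β)

lemma one_le_sq_add_mul_add_sq {m n : ℤ} (h : m ≠ 0 ∨ n ≠ 0) : 1 ≤ m ^ 2 + m * n + n ^ 2 := by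
  suffices 0 < m ^ 2 + m * n + n ^ 2 by omega
  rcases eq_or_ne n 0 with rfl | hn
  · have hm : m ≠ 0 := by simpa using h
    simpa using pow_pos (abs_pos.2 hm) 2
  · nlinarith [sq_nonneg (2 * m + n), pow_pos (abs_pos.2 hn) 2, sq_abs n]

lemma norm_sq_hexagonal_comb (c : ℝ) (m n : ℤ) :
    ‖(m : ℝ) • (c • vec2 1 0) + (n : ℝ) • (c • vec2 (1 / 2) (√3 / 2))‖ ^ 2
      = c ^ 2 * (m ^ 2 + m * n + n ^ 2) := by
  have h3 : √3 ^ 2 = 3 := sq_sqrt (by norm_num)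
  rw [EuclideanSpace.norm_eq, sq_sqrt (by positivity)]
  simp only [vec2, WithLp.equiv_symm_apply, PiLp.add_apply, PiLp.smul_apply, smul_eq_mul,
    Real.norm_eq_abs, sq_abs, Fin.sum_univ_two, Matrix.cons_val_zero, Matrix.cons_val_one,
    Matrix.cons_val_fin_one]
  linear_combination (n ^ 2 / 4 * c ^ 2 : ℝ) * h3

lemma one_le_norm_of_mem_triangularLattice {p : ℝ²} (hp : p ∈ triangularLattice \ {0}) :
    1 ≤ ‖p‖ := by
  obtain ⟨⟨m, n, rfl⟩, hp0⟩ := hp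
  have hmn : m ≠ 0 ∨ n ≠ 0 := by
    by_contra! h
    simp [h.1, h.2] at hp0
  have hq : (1 : ℝ) ≤ m ^ 2 + m * n + n ^ 2 := by exact_mod_cast one_le_sq_add_mul_add_sq hmn
  have hc : 1 ≤ 2 / √3 := by
    rw [le_div_iff₀ (by positivity), one_mul, sqrt_le_left (by norm_num)]
    norm_num
  refine one_le_sq_iff_one_le_abs _ |>.1 ?_ |>.trans_eq (abs_norm _)
  rw [norm_sq_hexagonal_comb, sq_sqrt (by positivity)]
  nlinarith

theorem isLattice2_triangularLattice : IsLattice2 triangularLattice := by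
  refine ⟨_, _, ?_, rfl⟩
  simp [det2, vec2]

instance : Nonempty ↥(triangularLattice \ {0}) :=
  ⟨⟨_, ⟨1, 0, rfl⟩, by simp [vec2]⟩⟩

/-- The function `s ↦ ζ_{A₂}(s)/s` is strictly decreasing on `(2,∞)`; in particular,
for all `α > β > 2`, `(α/β)ζ_{A₂}(β) - ζ_{A₂}(α) > 0`. -/
theorem triangular_zeta_div_s_strictAnti :
    StrictAntiOn (fun s : ℝ => epsteinZeta triangularLattice s / s) (Set.Ioi 2) ∧
    ∀ α β : ℝ, 2 < β → β < α →
      0 < (α / β) * epsteinZeta triangularLattice β - epsteinZeta triangularLattice α := by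
  have hanti : StrictAntiOn (fun s : ℝ => epsteinZeta triangularLattice s / s) (Set.Ioi 2) :=
    strictAntiOn_tsum_rpow_neg_div (fun p => one_le_norm_of_mem_triangularLattice p.2)
      (Set.Ioi_subset_Ioi zero_le_two)
      (fun _ hs => isLattice2_triangularLattice.summable_norm_rpow hs)
  refine ⟨hanti, fun α β hβ hβα => ?_⟩
  have hβ0 : 0 < β := by linarith
  have h := hanti hβ (hβ.trans hβα) hβα
  rw [div_lt_div_iff₀ (hβ0.trans hβα) hβ0] at h
  rw [sub_pos, div_mul_eq_mul_div, lt_div_iff₀ hβ0]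
  linarith
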